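/- arXiv:1108.4001 — 7 statements merged into one kernel-verified Lean document; each statement's English description precedes it below -/
import Mathlib

section
/- Let {Π_j}_{j∈J} (J a finite index set) be a finite family of Hermitian idempotent matrices over ℂ with Σ_j Π_j = 1, and let ρ be a Hermitian matrix. Then Σ_j [ρ, Π_j] [ρ, Π_j]ᴴ = Φ(ρ²) + ρ² − ρ Φ(ρ) − Φ(ρ) ρ, where [A,B] := AB − BA, ᴴ denotes conjugate transpose, and Φ(σ) := Σ_j Π_j σ Π_j. In particular, if Φ(ρ) = ρ then Σ_j [ρ, Π_j] [ρ, Π_j]ᴴ = Φ(ρ²) − ρ². -/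
open Matrix

/-- The key algebraic identity in the proof of Theorem 1: for a family of
Hermitian idempotents `{Π j}` summing to the identity and a Hermitian `ρ`,
`∑ j, [ρ, Π j] [ρ, Π j]ᴴ = Φ(ρ²) + ρ² − ρ Φ(ρ) − Φ(ρ) ρ`, where
`Φ(σ) = ∑ j, Π j σ Π j`.  In particular, if `Φ(ρ) = ρ` then
`∑ j, [ρ, Π j] [ρ, Π j]ᴴ = Φ(ρ²) − ρ²`. -/
theorem sum_commutator_mul_conjTranspose_eq
    {n J : Type*} [Fintype n] [DecidableEq n] [Fintype J]
    (P : J → Matrix n n ℂ)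
    (hherm : ∀ j, (P j).IsHermitian)
    (hidem : ∀ j, P j * P j = P j)
    (hsum : ∑ j, P j = 1)
    (ρ : Matrix n n ℂ)
    (hρ : ρ.IsHermitian) :
    (∑ j, (ρ * P j - P j * ρ) * (ρ * P j - P j * ρ)ᴴ
        = (∑ j, P j * (ρ * ρ) * P j) + ρ * ρ
            - ρ * (∑ j, P j * ρ * P j) - (∑ j, P j * ρ * P j) * ρ)
      ∧ ((∑ j, P j * ρ * P j) = ρ →
          ∑ j, (ρ * P j - P j * ρ) * (ρ * P j - P j * ρ)ᴴ
            = (∑ j, P j * (ρ * ρ) * P j) - ρ * ρ) := by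
  have key : ∀ j, (ρ * P j - P j * ρ) * (ρ * P j - P j * ρ)ᴴ
      = ρ * P j * ρ - ρ * (P j * ρ * P j) - (P j * ρ * P j) * ρ + P j * (ρ * ρ) * P j := by
    intro j
    have h1 := (hherm j).eq
    have h2 := hρ.eq
    rw [conjTranspose_sub, conjTranspose_mul, conjTranspose_mul, h1, h2]
    have hP := hidem j
    calc (ρ * P j - P j * ρ) * (P j * ρ - ρ * P j)
        = ρ * (P j * P j) * ρ - ρ * (P j * ρ * P j) - (P j * ρ * P j) * ρ + P j * (ρ * ρ) * P j := by
          noncomm_ring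
      _ = ρ * P j * ρ - ρ * (P j * ρ * P j) - (P j * ρ * P j) * ρ + P j * (ρ * ρ) * P j := by
          rw [hP]
  have hmain : ∑ j, (ρ * P j - P j * ρ) * (ρ * P j - P j * ρ)ᴴ
      = (∑ j, P j * (ρ * ρ) * P j) + ρ * ρ
          - ρ * (∑ j, P j * ρ * P j) - (∑ j, P j * ρ * P j) * ρ := by
    simp only [key]
    rw [Finset.sum_add_distrib, Finset.sum_sub_distrib, Finset.sum_sub_distrib,
      ← Finset.mul_sum, ← Finset.sum_mul]
    have h3 : (∑ i, ρ * P i) = ρ := by rw [← Finset.mul_sum, hsum, mul_one]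
    rw [h3, ← Finset.sum_mul]
    abel
  refine ⟨hmain, fun hfix => ?_⟩
  rw [hmain, hfix]
  have : ρ * ρ - ρ * ρ - ρ * ρ = -(ρ * ρ) := by abel
  abel
end

section
/- Let A and B be finite index types, let {P_i}_{i∈I} be a complete orthogonal family of projectors on matrices indexed by A, and {Q_k}_{k∈K} a complete orthogonal family of projectors on matrices indexed by B. Suppose a matrix ρ indexed by A × B has the classical form ρ = Σ_{i,k} p_{ik} • (P_i ⊗ Q_k) for some complex coefficients p_{ik}. Let ρ_A and ρ_B be the partial traces of ρ over B and over A respectively. Then ρ commutes with ρ_A ⊗ ρ_B, i.e. [ρ, ρ_A ⊗ ρ_B] = 0. -/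
open Matrix Kronecker

section AuxClassicalState

variable {A B I K : Type*} [Fintype A] [Fintype B] [Fintype I] [Fintype K]
    [DecidableEq I] [DecidableEq K]

private lemma aux_mul_classical (P : I → Matrix A A ℂ)
    (hPidem : ∀ i, P i * P i = P i)
    (hPorth : ∀ i i', i ≠ i' → P i * P i' = 0)
    (Q : K → Matrix B B ℂ)
    (hQidem : ∀ k, Q k * Q k = Q k)
    (hQorth : ∀ k k', k ≠ k' → Q k * Q k' = 0)
    (f g : I → K → ℂ) :
    (∑ i, ∑ k, f i k • (P i ⊗ₖ Q k)) * (∑ i, ∑ k, g i k • (P i ⊗ₖ Q k))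
      = ∑ i, ∑ k, (f i k * g i k) • (P i ⊗ₖ Q k) := by
  have key : ∀ (x y : I × K),
      (P x.1 ⊗ₖ Q x.2) * (P y.1 ⊗ₖ Q y.2)
        = if x = y then P x.1 ⊗ₖ Q x.2 else 0 := by
    rintro ⟨i, k⟩ ⟨i', k'⟩
    rw [← Matrix.mul_kronecker_mul]
    by_cases hi : i = i'
    · subst hi
      by_cases hk : k = k'
      · subst hk; simp [hPidem, hQidem]
      · simp [hQorth k k' hk, hk]
    · simp [hPorth i i' hi, hi]
  have conv1 : ∀ h : I → K → ℂ, (∑ i, ∑ k, h i k • (P i ⊗ₖ Q k))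
      = ∑ x : I × K, h x.1 x.2 • (P x.1 ⊗ₖ Q x.2) := fun h =>
    (Fintype.sum_prod_type (f := fun x : I × K => h x.1 x.2 • (P x.1 ⊗ₖ Q x.2))).symm
  rw [conv1 f, conv1 g, conv1 (fun i k => f i k * g i k), Finset.sum_mul_sum]
  refine Finset.sum_congr rfl fun x _ => ?_
  rw [Finset.sum_eq_single x]
  · rw [smul_mul_smul_comm, key, if_pos rfl]
  · intro y _ hy
    rw [smul_mul_smul_comm, key, if_neg (Ne.symm hy), smul_zero]
  · intro h; exact absurd (Finset.mem_univ x) h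

private lemma aux_margA (P : I → Matrix A A ℂ) (Q : K → Matrix B B ℂ)
    (p : I → K → ℂ) :
    (Matrix.of fun a a' => ∑ b, (∑ i, ∑ k, p i k • (P i ⊗ₖ Q k)) (a, b) (a', b))
      = ∑ i, (∑ k, p i k * (Q k).trace) • P i := by
  ext a a'
  simp only [Matrix.of_apply, Matrix.sum_apply, Matrix.smul_apply,
    kroneckerMap_apply, smul_eq_mul, Matrix.trace, Matrix.diag, Finset.sum_mul]
  rw [Finset.sum_comm]
  refine Finset.sum_congr rfl fun i _ => ?_
  rw [Finset.sum_comm]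
  refine Finset.sum_congr rfl fun k _ => ?_
  rw [Finset.mul_sum, Finset.sum_mul]
  exact Finset.sum_congr rfl fun b _ => by ring

private lemma aux_margB (P : I → Matrix A A ℂ) (Q : K → Matrix B B ℂ)
    (p : I → K → ℂ) :
    (Matrix.of fun b b' => ∑ a, (∑ i, ∑ k, p i k • (P i ⊗ₖ Q k)) (a, b) (a, b'))
      = ∑ k, (∑ i, p i k * (P i).trace) • Q k := by
  ext b b'
  simp only [Matrix.of_apply, Matrix.sum_apply, Matrix.smul_apply,
    kroneckerMap_apply, smul_eq_mul, Matrix.trace, Matrix.diag, Finset.sum_mul]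
  have swap : ∀ (F : A → I → K → ℂ),
      ∑ a, ∑ i, ∑ k, F a i k = ∑ k, ∑ i, ∑ a, F a i k :=
    fun F => by
      calc ∑ a, ∑ i, ∑ k, F a i k
          = ∑ i, ∑ a, ∑ k, F a i k := Finset.sum_comm
        _ = ∑ i, ∑ k, ∑ a, F a i k :=
            Finset.sum_congr rfl fun i _ => Finset.sum_comm
        _ = ∑ k, ∑ i, ∑ a, F a i k := Finset.sum_comm
  rw [swap]
  refine Finset.sum_congr rfl fun k _ => Finset.sum_congr rfl fun i _ => ?_
  rw [Finset.mul_sum, Finset.sum_mul]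
  exact Finset.sum_congr rfl fun a _ => by ring

end AuxClassicalState

/-- Bipartite case of Theorem 2: a classical state
`ρ = ∑ i k, p i k • (P i ⊗ Q k)` (with `{P i}`, `{Q k}` complete orthogonal
projector families) commutes with the tensor product of its reduced density
operators: `[ρ, ρ_A ⊗ ρ_B] = 0`. -/
theorem classical_state_commutes_with_product_of_marginals
    {A B I K : Type*} [Fintype A] [DecidableEq A] [Fintype B] [DecidableEq B]
    [Fintype I] [Fintype K]
    (P : I → Matrix A A ℂ)
    (hPherm : ∀ i, (P i).IsHermitian)
    (hPidem : ∀ i, P i * P i = P i)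
    (hPorth : ∀ i i', i ≠ i' → P i * P i' = 0)
    (hPsum : ∑ i, P i = 1)
    (Q : K → Matrix B B ℂ)
    (hQherm : ∀ k, (Q k).IsHermitian)
    (hQidem : ∀ k, Q k * Q k = Q k)
    (hQorth : ∀ k k', k ≠ k' → Q k * Q k' = 0)
    (hQsum : ∑ k, Q k = 1)
    (p : I → K → ℂ)
    (ρ : Matrix (A × B) (A × B) ℂ)
    (hρ : ρ = ∑ i, ∑ k, p i k • (P i ⊗ₖ Q k))
    (ρA : Matrix A A ℂ)
    (hρA : ρA = Matrix.of fun a a' => ∑ b, ρ (a, b) (a', b))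
    (ρB : Matrix B B ℂ)
    (hρB : ρB = Matrix.of fun b b' => ∑ a, ρ (a, b) (a, b')) :
    ρ * (ρA ⊗ₖ ρB) - (ρA ⊗ₖ ρB) * ρ = 0 := by
  letI : DecidableEq I := Classical.decEq I
  letI : DecidableEq K := Classical.decEq K
  set cA : I → ℂ := fun i => ∑ k, p i k * (Q k).trace with hcA
  set cB : K → ℂ := fun k => ∑ i, p i k * (P i).trace with hcB
  have hA : ρA = ∑ i, cA i • P i := by rw [hρA, hρ]; exact aux_margA P Q p
  have hB : ρB = ∑ k, cB k • Q k := by rw [hρB, hρ]; exact aux_margB P Q p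
  have hAB : ρA ⊗ₖ ρB = ∑ i, ∑ k, (cA i * cB k) • (P i ⊗ₖ Q k) := by
    rw [hA, hB]
    ext ⟨a, b⟩ ⟨a', b'⟩
    simp only [kroneckerMap_apply, Matrix.sum_apply, Matrix.smul_apply,
      smul_eq_mul, Finset.sum_mul_sum]
    exact Finset.sum_congr rfl fun i _ => Finset.sum_congr rfl fun k _ => by ring
  rw [hρ, hAB,
    aux_mul_classical P hPidem hPorth Q hQidem hQorth p (fun i k => cA i * cB k),
    aux_mul_classical P hPidem hPorth Q hQidem hQorth (fun i k => cA i * cB k) p,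
    sub_eq_zero]
  refine Finset.sum_congr rfl fun i _ => Finset.sum_congr rfl fun k _ => ?_
  ring_nf
end

section
/- Let A, B, C be finite index types and let {P_i}, {Q_k}, {R_l} be complete orthogonal families of projectors on matrices indexed by A, B, C respectively. Suppose a matrix ρ indexed by A × B × C has the classical form ρ = Σ_{i,k,l} p_{ikl} • (P_i ⊗ Q_k ⊗ R_l) for some complex coefficients p_{ikl}. Let ρ_A, ρ_B, ρ_C denote the reduced matrices obtained by partial tracing ρ over the other two factors. Then [ρ, ρ_A ⊗ ρ_B ⊗ ρ_C] = 0. -/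
open Matrix

/-- Threefold Kronecker product of matrices, indexed by triples:
`(P ⊗ Q ⊗ R)((a,b,c),(a',b',c')) = P a a' * Q b b' * R c c'`. -/
def kron3 {A B C : Type*} (P : Matrix A A ℂ) (Q : Matrix B B ℂ) (R : Matrix C C ℂ) :
    Matrix (A × B × C) (A × B × C) ℂ :=
  Matrix.of fun x y => P x.1 y.1 * Q x.2.1 y.2.1 * R x.2.2 y.2.2

lemma sum_rot3' {A B C : Type*} [Fintype A] [Fintype B] [Fintype C] (f : A → B → C → ℂ) :
    ∑ b : B, ∑ c : C, ∑ a : A, f a b c = ∑ a, ∑ b, ∑ c, f a b c := by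
  have h2 : ∑ b : B, ∑ a : A, ∑ c : C, f a b c = ∑ a : A, ∑ b : B, ∑ c : C, f a b c :=
    Finset.sum_comm
  rw [← h2]
  exact Finset.sum_congr rfl fun b _ => Finset.sum_comm

lemma sum_rot3 {A B C : Type*} [Fintype A] [Fintype B] [Fintype C] (f : A → B → C → ℂ) :
    ∑ c : C, ∑ b : B, ∑ a : A, f a b c = ∑ a, ∑ b, ∑ c, f a b c := by
  have h1 : ∑ c : C, ∑ b : B, ∑ a : A, f a b c = ∑ b : B, ∑ c : C, ∑ a : A, f a b c :=
    Finset.sum_comm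
  rw [h1]
  exact sum_rot3' f

lemma kron3_mul {A B C : Type*} [Fintype A] [Fintype B] [Fintype C]
    (P P' : Matrix A A ℂ) (Q Q' : Matrix B B ℂ) (R R' : Matrix C C ℂ) :
    kron3 P Q R * kron3 P' Q' R' = kron3 (P * P') (Q * Q') (R * R') := by
  ext ⟨a, b, c⟩ ⟨a', b', c'⟩
  simp only [kron3, mul_apply, of_apply, Fintype.sum_prod_type, Finset.sum_mul, Finset.mul_sum]
  rw [sum_rot3 (f := fun z y x => P a z * P' z a' * (Q b y * Q' y b') * (R c x * R' x c'))]
  refine Finset.sum_congr rfl fun x _ => Finset.sum_congr rfl fun y _ =>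
    Finset.sum_congr rfl fun z _ => by ring

/-- Tripartite case of Theorem 2: a classical state
`ρ = ∑ i k l, p i k l • (P i ⊗ Q k ⊗ R l)` (with `{P i}`, `{Q k}`, `{R l}`
complete orthogonal projector families) commutes with the tensor product of
its reduced density operators: `[ρ, ρ_A ⊗ ρ_B ⊗ ρ_C] = 0`. -/
theorem tripartite_classical_state_commutes_with_product_of_marginals
    {A B C I K L : Type*}
    [Fintype A] [DecidableEq A] [Fintype B] [DecidableEq B]
    [Fintype C] [DecidableEq C] [Fintype I] [Fintype K] [Fintype L]
    (P : I → Matrix A A ℂ)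
    (hPherm : ∀ i, (P i).IsHermitian)
    (hPidem : ∀ i, P i * P i = P i)
    (hPorth : ∀ i i', i ≠ i' → P i * P i' = 0)
    (hPsum : ∑ i, P i = 1)
    (Q : K → Matrix B B ℂ)
    (hQherm : ∀ k, (Q k).IsHermitian)
    (hQidem : ∀ k, Q k * Q k = Q k)
    (hQorth : ∀ k k', k ≠ k' → Q k * Q k' = 0)
    (hQsum : ∑ k, Q k = 1)
    (R : L → Matrix C C ℂ)
    (hRherm : ∀ l, (R l).IsHermitian)
    (hRidem : ∀ l, R l * R l = R l)
    (hRorth : ∀ l l', l ≠ l' → R l * R l' = 0)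
    (hRsum : ∑ l, R l = 1)
    (p : I → K → L → ℂ)
    (ρ : Matrix (A × B × C) (A × B × C) ℂ)
    (hρ : ρ = ∑ i, ∑ k, ∑ l, p i k l • kron3 (P i) (Q k) (R l))
    (ρA : Matrix A A ℂ)
    (hρA : ρA = Matrix.of fun a a' => ∑ b, ∑ c, ρ (a, b, c) (a', b, c))
    (ρB : Matrix B B ℂ)
    (hρB : ρB = Matrix.of fun b b' => ∑ a, ∑ c, ρ (a, b, c) (a, b', c))
    (ρC : Matrix C C ℂ)
    (hρC : ρC = Matrix.of fun c c' => ∑ a, ∑ b, ρ (a, b, c) (a, b, c')) :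
    ρ * kron3 ρA ρB ρC - kron3 ρA ρB ρC * ρ = 0 := by
  -- commuting of pairwise projectors
  have commP : ∀ i j, P i * P j = P j * P i := by
    intro i j
    by_cases h : i = j
    · rw [h]
    · rw [hPorth i j h, hPorth j i (Ne.symm h)]
  have commQ : ∀ i j, Q i * Q j = Q j * Q i := by
    intro i j
    by_cases h : i = j
    · rw [h]
    · rw [hQorth i j h, hQorth j i (Ne.symm h)]
  have commR : ∀ i j, R i * R j = R j * R i := by
    intro i j
    by_cases h : i = j
    · rw [h]
    · rw [hRorth i j h, hRorth j i (Ne.symm h)]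
  -- marginals are linear combinations of the projector families
  have hA : ρA = ∑ i, ∑ k, ∑ l, (p i k l * (Q k).trace * (R l).trace) • P i := by
    rw [hρA, hρ]
    ext a a'
    simp only [of_apply, Matrix.sum_apply, Matrix.smul_apply, kron3, smul_eq_mul,
      Matrix.trace, Matrix.diag]
    refine (sum_rot3' fun i b c =>
      ∑ k, ∑ l, p i k l * (P i a a' * Q k b b * R l c c)).trans ?_
    simp only [Finset.sum_mul, Finset.mul_sum]
    refine Finset.sum_congr rfl fun i _ => ?_
    refine (sum_rot3' fun k b c =>
      ∑ l, p i k l * (P i a a' * Q k b b * R l c c)).trans ?_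
    refine Finset.sum_congr rfl fun k _ => ?_
    refine (sum_rot3' fun l b c => p i k l * (P i a a' * Q k b b * R l c c)).trans ?_
    refine Finset.sum_congr rfl fun l _ => ?_
    first
    | exact Finset.sum_congr rfl fun x _ => Finset.sum_congr rfl fun y _ => by ring
    | exact Eq.trans (Finset.sum_congr rfl fun x _ => Finset.sum_congr rfl fun y _ => by ring)
        Finset.sum_comm
  have hB : ρB = ∑ i, ∑ k, ∑ l, (p i k l * (P i).trace * (R l).trace) • Q k := by
    rw [hρB, hρ]
    ext b b'
    simp only [of_apply, Matrix.sum_apply, Matrix.smul_apply, kron3, smul_eq_mul,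
      Matrix.trace, Matrix.diag]
    refine (sum_rot3' fun i a c =>
      ∑ k, ∑ l, p i k l * (P i a a * Q k b b' * R l c c)).trans ?_
    simp only [Finset.sum_mul, Finset.mul_sum]
    refine Finset.sum_congr rfl fun i _ => ?_
    refine (sum_rot3' fun k a c =>
      ∑ l, p i k l * (P i a a * Q k b b' * R l c c)).trans ?_
    refine Finset.sum_congr rfl fun k _ => ?_
    refine (sum_rot3' fun l a c => p i k l * (P i a a * Q k b b' * R l c c)).trans ?_
    refine Finset.sum_congr rfl fun l _ => ?_
    first
    | exact Finset.sum_congr rfl fun x _ => Finset.sum_congr rfl fun y _ => by ring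
    | exact Eq.trans (Finset.sum_congr rfl fun x _ => Finset.sum_congr rfl fun y _ => by ring)
        Finset.sum_comm
  have hC : ρC = ∑ i, ∑ k, ∑ l, (p i k l * (P i).trace * (Q k).trace) • R l := by
    rw [hρC, hρ]
    ext c c'
    simp only [of_apply, Matrix.sum_apply, Matrix.smul_apply, kron3, smul_eq_mul,
      Matrix.trace, Matrix.diag]
    refine (sum_rot3' fun i a b =>
      ∑ k, ∑ l, p i k l * (P i a a * Q k b b * R l c c')).trans ?_
    simp only [Finset.sum_mul, Finset.mul_sum]
    refine Finset.sum_congr rfl fun i _ => ?_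
    refine (sum_rot3' fun k a b =>
      ∑ l, p i k l * (P i a a * Q k b b * R l c c')).trans ?_
    refine Finset.sum_congr rfl fun k _ => ?_
    refine (sum_rot3' fun l a b => p i k l * (P i a a * Q k b b * R l c c')).trans ?_
    refine Finset.sum_congr rfl fun l _ => ?_
    first
    | exact Finset.sum_congr rfl fun x _ => Finset.sum_congr rfl fun y _ => by ring
    | exact Eq.trans (Finset.sum_congr rfl fun x _ => Finset.sum_congr rfl fun y _ => by ring)
        Finset.sum_comm
  -- each projector commutes with the corresponding marginal
  have hcommA : ∀ j, P j * ρA = ρA * P j := by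
    intro j
    rw [hA]
    simp only [Finset.mul_sum, Finset.sum_mul, mul_smul_comm, smul_mul_assoc]
    exact Finset.sum_congr rfl fun i _ => Finset.sum_congr rfl fun k _ =>
      Finset.sum_congr rfl fun l _ => by rw [commP j i]
  have hcommB : ∀ j, Q j * ρB = ρB * Q j := by
    intro j
    rw [hB]
    simp only [Finset.mul_sum, Finset.sum_mul, mul_smul_comm, smul_mul_assoc]
    exact Finset.sum_congr rfl fun i _ => Finset.sum_congr rfl fun k _ =>
      Finset.sum_congr rfl fun l _ => by rw [commQ j k]
  have hcommC : ∀ j, R j * ρC = ρC * R j := by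
    intro j
    rw [hC]
    simp only [Finset.mul_sum, Finset.sum_mul, mul_smul_comm, smul_mul_assoc]
    exact Finset.sum_congr rfl fun i _ => Finset.sum_congr rfl fun k _ =>
      Finset.sum_congr rfl fun l _ => by rw [commR j l]
  rw [sub_eq_zero, hρ]
  simp only [Finset.sum_mul, Finset.mul_sum, smul_mul_assoc, mul_smul_comm]
  refine Finset.sum_congr rfl fun i _ => Finset.sum_congr rfl fun k _ =>
    Finset.sum_congr rfl fun l _ => ?_
  rw [kron3_mul, kron3_mul, hcommA i, hcommB k, hcommC l]
end

section
/- Let A and B be finite index types, let (u_i)_{i∈I} be an orthonormal basis of ℂ^A and (w_k)_{k∈K} an orthonormal basis of ℂ^B, and set P_i := u_i u_iᴴ and Q_k := w_k w_kᴴ. If a matrix ρ indexed by A × B satisfies Σ_{i,k} (P_i ⊗ Q_k) ρ (P_i ⊗ Q_k) = ρ, then [ρ, ρ_A ⊗ ρ_B] = 0, where ρ_A and ρ_B are the partial traces of ρ over B and over A respectively. That is, a nonzero commutator [ρ, ρ_A ⊗ ρ_B] witnesses that ρ is disturbed by every such local von Neumann measurement in this basis pair, and vanishing of the commutator is necessary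 for classicality. -/
/-!
The invariance `∑ (P i ⊗ Q k) ρ (P i ⊗ Q k) = ρ` under rank-one projectors forces
`ρ = ∑ c i k • (P i ⊗ Q k)`, since a rank-one projector sandwiches any matrix to a multiple
of itself. Taking partial traces (`trace (Q k) = trace (P i) = 1`) makes `ρ_A` a combination
of the `P i` and `ρ_B` one of the `Q k`. Orthogonal rank-one projectors commute, so
`ρ_A ⊗ ρ_B` commutes with every `P i ⊗ Q k`, hence with `ρ`.
-/

open Matrix Kronecker

namespace Matrix

variable {l m n o R : Type*} [CommSemiring R]

def partialTraceRight [Fintype n] : Matrix (m × n) (m × n) R →ₗ[R] Matrix m m R where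
  toFun M := of fun a a' => ∑ b, M (a, b) (a', b)
  map_add' M N := by ext; simp [Finset.sum_add_distrib]
  map_smul' c M := by ext; simp [Finset.mul_sum]

def partialTraceLeft [Fintype m] : Matrix (m × n) (m × n) R →ₗ[R] Matrix n n R where
  toFun M := of fun b b' => ∑ a, M (a, b) (a, b')
  map_add' M N := by ext; simp [Finset.sum_add_distrib]
  map_smul' c M := by ext; simp [Finset.mul_sum]

theorem partialTraceRight_kronecker [Fintype n] (X : Matrix m m R) (Y : Matrix n n R) :
    partialTraceRight (X ⊗ₖ Y) = trace Y • X := by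
  ext a a'
  simp [partialTraceRight, trace, Finset.mul_sum, mul_comm]

theorem partialTraceLeft_kronecker [Fintype m] (X : Matrix m m R) (Y : Matrix n n R) :
    partialTraceLeft (X ⊗ₖ Y) = trace X • Y := by
  ext b b'
  simp [partialTraceLeft, trace, Finset.sum_mul]

theorem vecMulVec_mul_mul_vecMulVec [Fintype m] [Fintype n] (x : l → R) (y : m → R)
    (M : Matrix m n R) (x' : n → R) (y' : o → R) :
    vecMulVec x y * M * vecMulVec x' y' = (y ⬝ᵥ M *ᵥ x') • vecMulVec x y' := by
  rw [Matrix.mul_assoc, mul_vecMulVec, vecMulVec_mul_vecMulVec, vecMulVec_smul]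

theorem vecMulVec_kronecker_vecMulVec (x : l → R) (y : m → R) (x' : n → R) (y' : o → R) :
    vecMulVec x y ⊗ₖ vecMulVec x' y'
      = vecMulVec (fun p : l × n => x p.1 * x' p.2) (fun p : m × o => y p.1 * y' p.2) := by
  ext ⟨a, b⟩ ⟨a', b'⟩
  simp only [kroneckerMap_apply, vecMulVec_apply]
  ring

theorem exists_kronecker_vecMulVec_mul_mul_eq_smul [Fintype l] [Fintype m] [Fintype n]
    [Fintype o] (x : l → R) (y : m → R) (x' : n → R) (y' : o → R)
    (M : Matrix (m × o) (l × n) R) :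
    ∃ c : R, (vecMulVec x y ⊗ₖ vecMulVec x' y') * M * (vecMulVec x y ⊗ₖ vecMulVec x' y')
      = c • (vecMulVec x y ⊗ₖ vecMulVec x' y') := by
  rw [vecMulVec_kronecker_vecMulVec]
  exact ⟨_, vecMulVec_mul_mul_vecMulVec _ _ _ _ _⟩

theorem commute_vecMulVec_star_of_pairwise_dotProduct_eq_zero [Fintype n] [Star R]
    {ι : Type*} {v : ι → n → R} (hv : Pairwise fun i j => star (v i) ⬝ᵥ v j = 0)
    (i j : ι) :
    Commute (vecMulVec (v i) (star (v i))) (vecMulVec (v j) (star (v j))) := by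
  obtain rfl | hij := eq_or_ne i j
  · rfl
  · simp only [Commute, SemiconjBy, vecMulVec_mul_vecMulVec, hv hij, hv hij.symm, zero_smul,
      vecMulVec_zero]

theorem _root_.Commute.kronecker [Fintype m] [Fintype n] {X X' : Matrix m m R}
    {Y Y' : Matrix n n R} (hX : Commute X X') (hY : Commute Y Y') :
    Commute (X ⊗ₖ Y) (X' ⊗ₖ Y') := by
  simp only [Commute, SemiconjBy, ← mul_kronecker_mul, hX.eq, hY.eq]

theorem commute_partialTraceRight_kronecker_partialTraceLeft [Fintype m] [Fintype n]
    {ι κ : Type*} [Fintype ι] [Fintype κ] {P : ι → Matrix m m R} {Q : κ → Matrix n n R}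
    (hP : ∀ i j, Commute (P i) (P j)) (hQ : ∀ k l, Commute (Q k) (Q l))
    (htrP : ∀ i, trace (P i) = 1) (htrQ : ∀ k, trace (Q k) = 1) {c : ι → κ → R}
    {ρ : Matrix (m × n) (m × n) R} (hρ : ρ = ∑ i, ∑ k, c i k • (P i ⊗ₖ Q k)) :
    Commute ρ (partialTraceRight ρ ⊗ₖ partialTraceLeft ρ) := by
  have hρA : partialTraceRight ρ = ∑ i, ∑ k, c i k • P i := by
    simp [hρ, partialTraceRight_kronecker, htrQ]
  have hρB : partialTraceLeft ρ = ∑ i, ∑ k, c i k • Q k := by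
    simp [hρ, partialTraceLeft_kronecker, htrP]
  have hA (j : ι) : Commute (partialTraceRight ρ) (P j) := by
    rw [hρA]
    exact .sum_left _ _ _ fun i _ => .sum_left _ _ _ fun k _ => (hP i j).smul_left _
  have hB (l : κ) : Commute (partialTraceLeft ρ) (Q l) := by
    rw [hρB]
    exact .sum_left _ _ _ fun i _ => .sum_left _ _ _ fun k _ => (hQ k l).smul_left _
  nth_rw 1 [hρ]
  exact .sum_left _ _ _ fun i _ => .sum_left _ _ _ fun k _ =>
    ((hA i).kronecker (hB k)).symm.smul_left _

end Matrix

theorem measurement_invariance_implies_witness_vanishes_general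
    {A B I K : Type*} [Fintype A] [Fintype B]
    [Fintype I] [DecidableEq I] [Fintype K] [DecidableEq K]
    (u : I → A → ℂ)
    (hu : ∀ i i', ∑ a, (starRingEnd ℂ) (u i a) * u i' a = if i = i' then 1 else 0)
    (w : K → B → ℂ)
    (hw : ∀ k k', ∑ b, (starRingEnd ℂ) (w k b) * w k' b = if k = k' then 1 else 0)
    (P : I → Matrix A A ℂ)
    (hP : ∀ i, P i = Matrix.vecMulVec (u i) (star (u i)))
    (Q : K → Matrix B B ℂ)
    (hQ : ∀ k, Q k = Matrix.vecMulVec (w k) (star (w k)))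
    (ρ : Matrix (A × B) (A × B) ℂ)
    (hfix : ∑ i, ∑ k, (P i ⊗ₖ Q k) * ρ * (P i ⊗ₖ Q k) = ρ)
    (ρA : Matrix A A ℂ)
    (hρA : ρA = Matrix.of fun a a' => ∑ b, ρ (a, b) (a', b))
    (ρB : Matrix B B ℂ)
    (hρB : ρB = Matrix.of fun b b' => ∑ a, ρ (a, b) (a, b')) :
    ρ * (ρA ⊗ₖ ρB) - (ρA ⊗ₖ ρB) * ρ = 0 := by
  have hu' (i j : I) : star (u i) ⬝ᵥ u j = if i = j then 1 else 0 := hu i j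
  have hw' (k l : K) : star (w k) ⬝ᵥ w l = if k = l then 1 else 0 := hw k l
  have hPP (i j : I) : Commute (P i) (P j) := by
    simpa only [hP] using commute_vecMulVec_star_of_pairwise_dotProduct_eq_zero
      (fun i j hij => by simp [hu', hij]) i j
  have hQQ (k l : K) : Commute (Q k) (Q l) := by
    simpa only [hQ] using commute_vecMulVec_star_of_pairwise_dotProduct_eq_zero
      (fun k l hkl => by simp [hw', hkl]) k l
  have htrP (i : I) : trace (P i) = 1 := by
    rw [hP, trace_vecMulVec, dotProduct_comm, hu', if_pos rfl]
  have htrQ (k : K) : trace (Q k) = 1 := by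
    rw [hQ, trace_vecMulVec, dotProduct_comm, hw', if_pos rfl]
  have hsandwich (i : I) (k : K) :
      ∃ c : ℂ, (P i ⊗ₖ Q k) * ρ * (P i ⊗ₖ Q k) = c • (P i ⊗ₖ Q k) := by
    rw [hP, hQ]
    exact exists_kronecker_vecMulVec_mul_mul_eq_smul _ _ _ _ ρ
  choose c hc using hsandwich
  have hρ : ρ = ∑ i, ∑ k, c i k • (P i ⊗ₖ Q k) := hfix.symm.trans (by simp only [hc])
  subst hρA hρB
  exact sub_eq_zero.mpr
    (commute_partialTraceRight_kronecker_partialTraceLeft hPP hQQ htrP htrQ hρ).eq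

/-- Combination of Theorems 1 and 2: if a bipartite state `ρ` is undisturbed by
a local rank-one von Neumann measurement built from orthonormal bases
`(u i)` of `ℂ^A` and `(w k)` of `ℂ^B` (projectors `P i = u i (u i)ᴴ`,
`Q k = w k (w k)ᴴ`), then the witness vanishes: `[ρ, ρ_A ⊗ ρ_B] = 0`.
Hence a nonzero commutator witnesses nonclassicality. -/
theorem measurement_invariance_implies_witness_vanishes
    {A B I K : Type*} [Fintype A] [DecidableEq A] [Fintype B] [DecidableEq B]
    [Fintype I] [DecidableEq I] [Fintype K] [DecidableEq K]
    (hcardI : Fintype.card I = Fintype.card A)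
    (hcardK : Fintype.card K = Fintype.card B)
    (u : I → A → ℂ)
    (hu : ∀ i i', ∑ a, (starRingEnd ℂ) (u i a) * u i' a = if i = i' then 1 else 0)
    (w : K → B → ℂ)
    (hw : ∀ k k', ∑ b, (starRingEnd ℂ) (w k b) * w k' b = if k = k' then 1 else 0)
    (P : I → Matrix A A ℂ)
    (hP : ∀ i, P i = Matrix.vecMulVec (u i) (star (u i)))
    (Q : K → Matrix B B ℂ)
    (hQ : ∀ k, Q k = Matrix.vecMulVec (w k) (star (w k)))
    (ρ : Matrix (A × B) (A × B) ℂ)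
    (hfix : ∑ i, ∑ k, (P i ⊗ₖ Q k) * ρ * (P i ⊗ₖ Q k) = ρ)
    (ρA : Matrix A A ℂ)
    (hρA : ρA = Matrix.of fun a a' => ∑ b, ρ (a, b) (a', b))
    (ρB : Matrix B B ℂ)
    (hρB : ρB = Matrix.of fun b b' => ∑ a, ρ (a, b) (a, b')) :
    ρ * (ρA ⊗ₖ ρB) - (ρA ⊗ₖ ρB) * ρ = 0 :=
  measurement_invariance_implies_witness_vanishes_general u hu w hw P hP Q hQ ρ hfix ρA hρA ρB hρB
end

section
/- Let a, b, d, z, f be real numbers with a + 2b + d = 1, and let ρ be the two-qubit X-state: the matrix indexed by (Fin 2 × Fin 2) with diagonal entries ρ((0,0),(0,0)) = a, ρ((0,1),(0,1)) = b, ρ((1,0),(1,0)) = b, ρ((1,1),(1,1)) = d, off-diagonal entries ρ((0,1),(1,0)) = ρ((1,0),(0,1)) = z and ρ((0,0),(1,1)) = ρ((1,1),(0,0)) = f, and all other entries zero. Let ρ_A and ρ_B be the partial traces of ρ over the second and first factor respectively. Then the commutator W := [ρ, ρ_A ⊗ ρ_B] has all entries zero except W((0,0),(1,1)) = k and W((1,1),(0,0))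 = −k, where k = f·((b+d)² − (a+b)²). -/
open Matrix Kronecker

/-- The two-qubit X-state with real parameters `a, b, d, z, f`:
diagonal entries `(a, b, b, d)` in the basis order `(0,0),(0,1),(1,0),(1,1)`,
inner anti-diagonal entries `z`, corner entries `f`, zeros elsewhere. -/
def Xstate (a b d z f : ℝ) : Matrix (Fin 2 × Fin 2) (Fin 2 × Fin 2) ℂ :=
  Matrix.of fun x y =>
    if x = (0, 0) ∧ y = (0, 0) then (a : ℂ)
    else if x = (0, 1) ∧ y = (0, 1) then (b : ℂ)
    else if x = (1, 0) ∧ y = (1, 0) then (b : ℂ)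
    else if x = (1, 1) ∧ y = (1, 1) then (d : ℂ)
    else if (x = (0, 1) ∧ y = (1, 0)) ∨ (x = (1, 0) ∧ y = (0, 1)) then (z : ℂ)
    else if (x = (0, 0) ∧ y = (1, 1)) ∨ (x = (1, 1) ∧ y = (0, 0)) then (f : ℂ)
    else 0

/-- Explicit evaluation (Eq. (10)) of the witness `W = [ρ, ρ_A ⊗ ρ_B]` for a
two-qubit X-state: all entries vanish except `W((0,0),(1,1)) = k` and
`W((1,1),(0,0)) = −k`, with `k = f((b+d)² − (a+b)²)`. -/
theorem witness_of_Xstate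
    (a b d z f : ℝ) (htr : a + 2 * b + d = 1)
    (ρ : Matrix (Fin 2 × Fin 2) (Fin 2 × Fin 2) ℂ)
    (hρ : ρ = Xstate a b d z f)
    (ρA : Matrix (Fin 2) (Fin 2) ℂ)
    (hρA : ρA = Matrix.of fun a₁ a₂ => ∑ b₁, ρ (a₁, b₁) (a₂, b₁))
    (ρB : Matrix (Fin 2) (Fin 2) ℂ)
    (hρB : ρB = Matrix.of fun b₁ b₂ => ∑ a₁, ρ (a₁, b₁) (a₁, b₂))
    (k : ℝ) (hk : k = f * ((b + d) ^ 2 - (a + b) ^ 2)) :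
    ρ * (ρA ⊗ₖ ρB) - (ρA ⊗ₖ ρB) * ρ
      = Matrix.of fun x y =>
          if x = (0, 0) ∧ y = (1, 1) then (k : ℂ)
          else if x = (1, 1) ∧ y = (0, 0) then (-k : ℂ)
          else 0 := by
  subst hρ hρA hρB hk
  ext ⟨x1,x2⟩ ⟨y1,y2⟩
  simp only [Matrix.sub_apply, Matrix.mul_apply, Matrix.kroneckerMap_apply,
    Fintype.sum_prod_type, Fin.sum_univ_two, Xstate, Matrix.of_apply, Prod.mk.injEq]
  fin_cases x1 <;> fin_cases x2 <;> fin_cases y1 <;> fin_cases y2 <;>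
    simp <;> push_cast <;> ring
end

section
/- Let a, b, d, z, f be real numbers with a + 2b + d = 1, and let ρ be the two-qubit X-state with these parameters (diagonal (a,b,b,d), inner anti-diagonal entries z, corner entries f, zeros elsewhere). Let ρ_A and ρ_B be its partial traces. Then [ρ, ρ_A ⊗ ρ_B] = 0 if and only if f = 0 or a = d. Equivalently, writing f = (⟨σx σx⟩ − ⟨σy σy⟩)/4 and a − d = ⟨σz⟩, vanishing of the witness is equivalent to ⟨σx σx⟩ = ⟨σy σy⟩ or ⟨σz⟩ = 0. -/
open Matrix Kronecker

/-!
Both marginals of the X-state are `diag(a + b, b + d)`, so `ρ_A ⊗ ρ_B` is diagonal with entries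
`g(i, j) = p_i p_j`, `p = (a + b, b + d)`. A matrix commutes with `diag g` iff `g x = g y` at every
nonzero entry `(x, y)`. The diagonal and the `z` entries impose nothing since `g(0,1) = g(1,0)`;
the `f` entries require `(a + b)² = (b + d)²`, i.e. `(a - d)(a + 2b + d) = 0`, which under
`a + 2b + d = 1` is `a = d`.
-/

namespace Matrix

variable {R m n : Type*}

def partialTraceSnd [AddCommMonoid R] [Fintype n] (ρ : Matrix (m × n) (m × n) R) :
    Matrix m m R :=
  of fun i j => ∑ k, ρ (i, k) (j, k)

def partialTraceFst [AddCommMonoid R] [Fintype m] (ρ : Matrix (m × n) (m × n) R) :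
    Matrix n n R :=
  of fun i j => ∑ k, ρ (k, i) (k, j)

theorem mul_diagonal_sub_diagonal_mul_apply [CommRing R] [Fintype n] [DecidableEq n]
    (M : Matrix n n R) (g : n → R) (x y : n) :
    (M * diagonal g - diagonal g * M) x y = M x y * (g y - g x) := by
  rw [sub_apply, mul_diagonal, diagonal_mul, mul_sub, mul_comm (g x)]

theorem mul_diagonal_sub_diagonal_mul_eq_zero_iff [CommRing R] [NoZeroDivisors R] [Fintype n]
    [DecidableEq n] (M : Matrix n n R) (g : n → R) :
    M * diagonal g - diagonal g * M = 0 ↔ ∀ x y, M x y = 0 ∨ g x = g y := by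
  rw [← ext_iff]
  simp only [mul_diagonal_sub_diagonal_mul_apply, zero_apply, mul_eq_zero, sub_eq_zero]
  exact forall₂_congr fun _ _ => or_congr_right eq_comm

end Matrix

open Matrix

section Xstate

variable (a b d z f : ℝ)

theorem partialTraceSnd_Xstate :
    partialTraceSnd (Xstate a b d z f) = diagonal ![(a : ℂ) + b, (b : ℂ) + d] := by
  ext i j
  fin_cases i <;> fin_cases j <;>
    simp [partialTraceSnd, Xstate, Fin.sum_univ_two, Prod.ext_iff]

theorem partialTraceFst_Xstate :
    partialTraceFst (Xstate a b d z f) = diagonal ![(a : ℂ) + b, (b : ℂ) + d] := by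
  ext i j
  fin_cases i <;> fin_cases j <;>
    simp [partialTraceFst, Xstate, Fin.sum_univ_two, Prod.ext_iff]

theorem Xstate_mul_diagonal_sub_diagonal_mul_eq_zero_iff (g : Fin 2 × Fin 2 → ℂ)
    (hg : g (0, 1) = g (1, 0)) :
    Xstate a b d z f * diagonal g - diagonal g * Xstate a b d z f = 0 ↔
      f = 0 ∨ g (0, 0) = g (1, 1) := by
  rw [mul_diagonal_sub_diagonal_mul_eq_zero_iff]
  constructor
  · intro h
    simpa [Xstate, Prod.ext_iff] using h (0, 0) (1, 1)
  · rintro h ⟨i, j⟩ ⟨k, l⟩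
    rcases h with h | h <;> fin_cases i <;> fin_cases j <;> fin_cases k <;> fin_cases l <;>
      simp [Xstate, Prod.ext_iff, hg, h]

end Xstate

theorem add_sq_eq_add_sq_iff_of_add_add_eq_one {a b d : ℝ} (h : a + 2 * b + d = 1) :
    ((a : ℂ) + b) ^ 2 = ((b : ℂ) + d) ^ 2 ↔ a = d := by
  have hC : (a : ℂ) + 2 * b + d = 1 := by exact_mod_cast h
  have key : ((a : ℂ) + b) ^ 2 - ((b : ℂ) + d) ^ 2 = a - d := by
    linear_combination ((a : ℂ) - d) * hC
  rw [← sub_eq_zero, key, sub_eq_zero, Complex.ofReal_inj]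

/-- Eqs. (12)–(13) of the paper: for a trace-one two-qubit X-state, the witness
`[ρ, ρ_A ⊗ ρ_B]` vanishes if and only if `f = 0` (isotropy of the two-point
function in the XY plane, `⟨σxσx⟩ = ⟨σyσy⟩`) or `a = d` (vanishing transverse
magnetization, `⟨σz⟩ = 0`). -/
theorem witness_of_Xstate_vanishes_iff
    (a b d z f : ℝ) (htr : a + 2 * b + d = 1)
    (ρ : Matrix (Fin 2 × Fin 2) (Fin 2 × Fin 2) ℂ)
    (hρ : ρ = Xstate a b d z f)
    (ρA : Matrix (Fin 2) (Fin 2) ℂ)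
    (hρA : ρA = Matrix.of fun a₁ a₂ => ∑ b₁, ρ (a₁, b₁) (a₂, b₁))
    (ρB : Matrix (Fin 2) (Fin 2) ℂ)
    (hρB : ρB = Matrix.of fun b₁ b₂ => ∑ a₁, ρ (a₁, b₁) (a₁, b₂)) :
    ρ * (ρA ⊗ₖ ρB) - (ρA ⊗ₖ ρB) * ρ = 0 ↔ f = 0 ∨ a = d := by
  rw [show ρA = partialTraceSnd ρ from hρA, show ρB = partialTraceFst ρ from hρB, hρ,
    partialTraceSnd_Xstate, partialTraceFst_Xstate, diagonal_kronecker_diagonal,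
    Xstate_mul_diagonal_sub_diagonal_mul_eq_zero_iff _ _ _ _ _ _ (mul_comm _ _)]
  simp only [cons_val_zero, cons_val_one, ← sq]
  exact or_congr_right (add_sq_eq_add_sq_iff_of_add_add_eq_one htr)
end

section
/- Let ψ ∈ ℂ^(Fin 2 × Fin 2) be the Bell state ψ = (e_(0,0) + e_(1,1))/√2 (where e denotes the standard basis), and let ρ = ψ ψᴴ be the corresponding rank-one density matrix. Then the partial traces satisfy ρ_A = (1/2)·1 and ρ_B = (1/2)·1, so ρ_A ⊗ ρ_B = (1/4)·1, and consequently [ρ, ρ_A ⊗ ρ_B] = 0, even though ρ is not of classical form. -/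
open Matrix Kronecker

/-- The Bell-state example: for `ψ = (e₀₀ + e₁₁)/√2` and `ρ = ψψᴴ`, the
marginals are maximally mixed, `ρ_A = ρ_B = (1/2)·1`, so
`ρ_A ⊗ ρ_B = (1/4)·1` and the witness vanishes, `[ρ, ρ_A ⊗ ρ_B] = 0`,
even though `ρ` is not of classical form
`∑ i k, p i k • (P i ⊗ Q k)` for any complete orthogonal projector families
`{P i}`, `{Q k}`.  Hence vanishing of the witness is not sufficient for
classicality. -/
theorem bell_state_witness_vanishes_but_not_classical
    (ψ : Fin 2 × Fin 2 → ℂ)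
    (hψ : ψ = fun x => if x = (0, 0) ∨ x = (1, 1) then (1 / Real.sqrt 2 : ℂ) else 0)
    (ρ : Matrix (Fin 2 × Fin 2) (Fin 2 × Fin 2) ℂ)
    (hρ : ρ = Matrix.vecMulVec ψ (star ψ))
    (ρA : Matrix (Fin 2) (Fin 2) ℂ)
    (hρA : ρA = Matrix.of fun a₁ a₂ => ∑ b₁, ρ (a₁, b₁) (a₂, b₁))
    (ρB : Matrix (Fin 2) (Fin 2) ℂ)
    (hρB : ρB = Matrix.of fun b₁ b₂ => ∑ a₁, ρ (a₁, b₁) (a₁, b₂)) :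
    ρA = (1 / 2 : ℂ) • 1
      ∧ ρB = (1 / 2 : ℂ) • 1
      ∧ ρA ⊗ₖ ρB = (1 / 4 : ℂ) • 1
      ∧ ρ * (ρA ⊗ₖ ρB) - (ρA ⊗ₖ ρB) * ρ = 0
      ∧ ¬ ∃ (nI nK : ℕ) (P : Fin nI → Matrix (Fin 2) (Fin 2) ℂ)
            (Q : Fin nK → Matrix (Fin 2) (Fin 2) ℂ) (p : Fin nI → Fin nK → ℂ),
            (∀ i, (P i).IsHermitian) ∧ (∀ i, P i * P i = P i)
              ∧ (∀ i i', i ≠ i' → P i * P i' = 0) ∧ (∑ i, P i = 1)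
              ∧ (∀ k, (Q k).IsHermitian) ∧ (∀ k, Q k * Q k = Q k)
              ∧ (∀ k k', k ≠ k' → Q k * Q k' = 0) ∧ (∑ k, Q k = 1)
              ∧ ρ = ∑ i, ∑ k, p i k • (P i ⊗ₖ Q k) := by
  have hinv : ((Real.sqrt 2 : ℂ))⁻¹ * ((Real.sqrt 2 : ℂ))⁻¹ = 2⁻¹ := by
    rw [← mul_inv, ← Complex.ofReal_mul, Real.mul_self_sqrt (by norm_num)]
    norm_num
  have hA : ρA = (1 / 2 : ℂ) • 1 := by
    subst hρA
    ext a b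
    fin_cases a <;> fin_cases b <;>
      simp [hρ, hψ, Matrix.vecMulVec_apply, Fin.sum_univ_two, Matrix.one_apply,
        Prod.ext_iff, hinv]
  have hB : ρB = (1 / 2 : ℂ) • 1 := by
    subst hρB
    ext a b
    fin_cases a <;> fin_cases b <;>
      simp [hρ, hψ, Matrix.vecMulVec_apply, Fin.sum_univ_two, Matrix.one_apply,
        Prod.ext_iff, hinv]
  have hK : ρA ⊗ₖ ρB = (1 / 4 : ℂ) • 1 := by
    rw [hA, hB, Matrix.smul_kronecker, Matrix.kronecker_smul, Matrix.one_kronecker_one,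
      smul_smul]
    norm_num
  refine ⟨hA, hB, hK, ?_, ?_⟩
  · rw [hK]
    simp [Matrix.mul_smul, Matrix.smul_mul]
  · rintro ⟨nI, nK, P, Q, p, hPh, hPP, hPo, hPs, hQh, hQQ, hQo, hQs, hρeq⟩
    -- each `P j ⊗ 1` commutes with `ρ`
    have hcomm : ∀ j, (P j ⊗ₖ (1 : Matrix (Fin 2) (Fin 2) ℂ)) * ρ
        = ρ * (P j ⊗ₖ (1 : Matrix (Fin 2) (Fin 2) ℂ)) := by
      intro j
      rw [hρeq, Finset.mul_sum, Finset.sum_mul]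
      refine Finset.sum_congr rfl fun i _ => ?_
      rw [Finset.mul_sum, Finset.sum_mul]
      refine Finset.sum_congr rfl fun k _ => ?_
      rw [Matrix.mul_smul, Matrix.smul_mul, ← Matrix.mul_kronecker_mul,
        ← Matrix.mul_kronecker_mul, one_mul, mul_one]
      by_cases h : i = j
      · subst h; rfl
      · rw [hPo j i (Ne.symm h), hPo i j h]
    -- hence every `P i` has vanishing `(0,1)` entry
    have hP01 : ∀ i, P i 0 1 = 0 := by
      intro i
      have h := congrFun (congrFun (hcomm i) (0, 1)) (0, 0)
      simp only [Matrix.mul_apply, hρ, hψ, Fintype.sum_prod_type, Fin.sum_univ_two,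
        Matrix.vecMulVec_apply, Matrix.kroneckerMap_apply, Matrix.one_apply] at h
      simp [Prod.ext_iff, hinv] at h
      exact h
    -- but then the `((0,0),(1,1))` entry of `ρ` would vanish
    have h2 := congrFun (congrFun hρeq (0, 0)) (1, 1)
    simp only [hρ, hψ] at h2
    simp [Matrix.vecMulVec_apply, Matrix.sum_apply, Matrix.kroneckerMap_apply,
      hP01, hinv] at h2
end
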